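/- arXiv:2511.19665 — 2 statements merged into one kernel-verified Lean document; each statement's English description precedes it below -/
import Mathlib

section
/- Let (A, D, act, add, e) be a strict change action in Cat, let G be an abelian group, and let F : A ⥤ Arr(G) be a functor. Then F is change-action differentiable with respect to the addition change action (Arr(G), Arr(G), +_G, +_G, 0), with derivative given by negating ∂F: there exists a functor δF : A × D ⥤ Arr(G), given on objects by δF(A, α) = F(act(A, α)) − F(A) and on morphisms by componentwise differences, such that: (CAD1) for every object (A, α), F(act(A, α)) = F(A) + δF(A, α), with the corresponding componentwise equations for morphisms; (CAD2, first part) δF(A, add(α, β)) = δF(A, α) + δF(act(A, α), β) on objects, with the corresponding componentwise equation on morphisms; (CAD2, second part) δF(A, e) = 0 on objects, and both components of δF(f, id_e) are 0 for every morphism f of A. -/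
open CategoryTheory

/-- Objects of the arrow category `Arr(G)` of the delooping of the abelian group `G`:
elements of `G` (morphisms of `BG`). -/
abbrev Arr (G : Type*) [AddCommGroup G] : Type _ := G

/-- The arrow category of the delooping of `G`: a morphism from `a` to `b` is a pair
`(f, g)` of elements of `G` with `f + b = a + g` (a commuting square in `BG`);
composition is componentwise addition and the identity is `(0, 0)`. -/
instance arrCategory (G : Type*) [AddCommGroup G] : Category (Arr G) where
  Hom a b := {p : G × G // p.1 + b = a + p.2}
  id a := ⟨(0, 0), by abel⟩
  comp {a b c} f g := ⟨(f.1.1 + g.1.1, f.1.2 + g.1.2), by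
    have h1 := f.2
    have h2 := g.2
    calc f.1.1 + g.1.1 + c = f.1.1 + (g.1.1 + c) := by abel
      _ = f.1.1 + (b + g.1.2) := by rw [h2]
      _ = f.1.1 + b + g.1.2 := by abel
      _ = a + f.1.2 + g.1.2 := by rw [h1]
      _ = a + (f.1.2 + g.1.2) := by abel⟩
  id_comp f := by apply Subtype.ext; simp
  comp_id f := by apply Subtype.ext; simp
  assoc f g h := by apply Subtype.ext; simp [add_assoc]

/-! `Arr(G)` is an abelian group object in `Cat`, so functors into it can be subtracted
pointwise, and `δF` is `act ⋙ F` minus `fst ⋙ F`. CAD1 then says `b + (a - b) = a`, and CAD2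
telescopes once the strict action laws identify `act(act(A, α), β)` with `act(A, add(α, β))`
(and `act(A, e)` with `A`), on morphisms as well as on objects. -/

namespace Arr

variable {G : Type*} [AddCommGroup G] {C : Type*} [Category C]

@[ext]
lemma hom_ext {a b : Arr G} {u v : a ⟶ b} (h : u.1 = v.1) : u = v :=
  Subtype.ext h

@[simp]
lemma id_val (a : Arr G) : (𝟙 a : a ⟶ a).1 = 0 :=
  rfl

@[simp]
lemma comp_val {a b c : Arr G} (u : a ⟶ b) (v : b ⟶ c) : (u ≫ v).1 = u.1 + v.1 :=
  rfl

lemma map_val_eq_of_heq (F : C ⥤ Arr G) {X X' Y Y' : C}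
    (hX : X = X') (hY : Y = Y') {f : X ⟶ Y} {f' : X' ⟶ Y'} (h : HEq f f') :
    (F.map f).1 = (F.map f').1 := by
  subst hX hY
  rw [eq_of_heq h]

def subHom {a b c d : Arr G} (u : a ⟶ b) (v : c ⟶ d) : (a - c : Arr G) ⟶ b - d :=
  ⟨u.1 - v.1, calc u.1.1 - v.1.1 + (b - d) = (u.1.1 + b) - (v.1.1 + d) := by abel
      _ = (a + u.1.2) - (c + v.1.2) := by rw [u.2, v.2]
      _ = a - c + (u.1.2 - v.1.2) := by abel⟩

@[simp]
lemma subHom_val {a b c d : Arr G} (u : a ⟶ b) (v : c ⟶ d) : (subHom u v).1 = u.1 - v.1 :=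
  rfl

@[simps obj]
def subFunctor (F₁ F₂ : C ⥤ Arr G) : C ⥤ Arr G where
  obj X := F₁.obj X - F₂.obj X
  map f := subHom (F₁.map f) (F₂.map f)
  map_id X := by ext1; simp
  map_comp f g := by ext1; simp [add_sub_add_comm]

@[simp]
lemma subFunctor_map_val (F₁ F₂ : C ⥤ Arr G) {X Y : C} (f : X ⟶ Y) :
    ((subFunctor F₁ F₂).map f).1 = (F₁.map f).1 - (F₂.map f).1 :=
  rfl

end Arr

theorem derivative_for_addition_change_action_general (G : Type) [AddCommGroup G]
    (A D : Type) [Category A] [Category D]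
    (act : A × D ⥤ A) (add : D × D ⥤ D) (e : D)
    -- strict action laws on objects
    (hacte : ∀ a : A, act.obj (a, e) = a)
    (hactcomp : ∀ (a : A) (α β : D),
      act.obj (act.obj (a, α), β) = act.obj (a, add.obj (α, β)))
    -- strict action laws on morphisms
    (hactem : ∀ {a b : A} (f : a ⟶ b),
      HEq (act.map ((f, 𝟙 e) : ((a, e) : A × D) ⟶ (b, e))) f)
    (hactcompm : ∀ {a b : A} {α α' β β' : D} (f : a ⟶ b) (φ : α ⟶ α') (ψ : β ⟶ β'),
      HEq (act.map ((act.map ((f, φ) : ((a, α) : A × D) ⟶ (b, α')), ψ)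
            : ((act.obj (a, α), β) : A × D) ⟶ (act.obj (b, α'), β')))
          (act.map ((f, add.map ((φ, ψ) : ((α, β) : D × D) ⟶ (α', β')))
            : ((a, add.obj (α, β)) : A × D) ⟶ (b, add.obj (α', β')))))
    (F : A ⥤ Arr G) :
    ∃ dF : (A × D) ⥤ Arr G,
      -- `δF` on objects and morphisms: componentwise differences
      (∀ p : A × D, dF.obj p = F.obj (act.obj p) - F.obj p.1) ∧
      (∀ {p q : A × D} (φ : p ⟶ q),
        (dF.map φ).1
          = ((F.map (act.map φ)).1.1 - (F.map φ.1).1.1,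
             (F.map (act.map φ)).1.2 - (F.map φ.1).1.2)) ∧
      -- CAD1 on objects: F(act(A, α)) = F(A) + δF(A, α)
      (∀ (a : A) (α : D), F.obj (act.obj (a, α)) = F.obj a + dF.obj (a, α)) ∧
      -- CAD1 on morphisms, componentwise
      (∀ {p q : A × D} (φ : p ⟶ q),
        (F.map (act.map φ)).1
          = ((F.map φ.1).1.1 + (dF.map φ).1.1,
             (F.map φ.1).1.2 + (dF.map φ).1.2)) ∧
      -- CAD2, first part, on objects
      (∀ (a : A) (α β : D),
        dF.obj (a, add.obj (α, β)) = dF.obj (a, α) + dF.obj (act.obj (a, α), β)) ∧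
      -- CAD2, first part, on morphisms, componentwise
      (∀ {a b : A} {α α' β β' : D} (f : a ⟶ b) (φ : α ⟶ α') (ψ : β ⟶ β'),
        (dF.map ((f, add.map ((φ, ψ) : ((α, β) : D × D) ⟶ (α', β')))
            : ((a, add.obj (α, β)) : A × D) ⟶ (b, add.obj (α', β')))).1
          = ((dF.map ((f, φ) : ((a, α) : A × D) ⟶ (b, α'))).1.1
              + (dF.map ((act.map ((f, φ) : ((a, α) : A × D) ⟶ (b, α')), ψ)
                  : ((act.obj (a, α), β) : A × D) ⟶ (act.obj (b, α'), β'))).1.1,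
             (dF.map ((f, φ) : ((a, α) : A × D) ⟶ (b, α'))).1.2
              + (dF.map ((act.map ((f, φ) : ((a, α) : A × D) ⟶ (b, α')), ψ)
                  : ((act.obj (a, α), β) : A × D) ⟶ (act.obj (b, α'), β'))).1.2)) ∧
      -- CAD2, second part
      (∀ a : A, dF.obj (a, e) = 0) ∧
      (∀ {a b : A} (f : a ⟶ b),
        (dF.map ((f, 𝟙 e) : ((a, e) : A × D) ⟶ (b, e))).1 = ((0 : G), (0 : G))) := by
  refine ⟨Arr.subFunctor (act ⋙ F) (CategoryTheory.Prod.fst A D ⋙ F), fun _ => rfl, fun _ => rfl,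
    fun _ _ => (add_sub_cancel _ _).symm, fun _ => (add_sub_cancel _ _).symm, ?_, ?_, ?_, ?_⟩
  · intro a α β
    simp only [Arr.subFunctor_obj, Functor.comp_obj, Prod.fst_obj, ← hactcomp]
    exact (sub_add_sub_cancel' _ _ _).symm
  · intro a b α α' β β' f φ ψ
    simp only [Arr.subFunctor_map_val, Functor.comp_map, Prod.fst_map,
      ← Arr.map_val_eq_of_heq F (hactcomp a α β) (hactcomp b α' β') (hactcompm f φ ψ)]
    exact (sub_add_sub_cancel' _ _ _).symm
  · intro a
    simp only [Arr.subFunctor_obj, Functor.comp_obj, Prod.fst_obj, hacte, sub_self]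
  · intro a b f
    simp only [Arr.subFunctor_map_val, Functor.comp_map, Prod.fst_map,
      Arr.map_val_eq_of_heq F (hacte a) (hacte b) (hactem f), sub_self]
    rfl

/-- Given a strict change action `(A, D, act, add, e)` in `Cat` and a functor
`F : A ⥤ Arr(G)`, the negated finite difference `δF(A, α) = F(act(A, α)) − F(A)` is a
change-action derivative of `F` with respect to the addition change action
`(Arr(G), Arr(G), +, +, 0)`: it satisfies CAD1 and CAD2. -/
theorem derivative_for_addition_change_action (G : Type) [AddCommGroup G]
    (A D : Type) [Category A] [Category D]
    (act : A × D ⥤ A) (add : D × D ⥤ D) (e : D)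
    -- strict monoid laws on objects
    (hunit₁ : ∀ α : D, add.obj (α, e) = α)
    (hunit₂ : ∀ α : D, add.obj (e, α) = α)
    (hassoc : ∀ α β γ : D, add.obj (add.obj (α, β), γ) = add.obj (α, add.obj (β, γ)))
    -- strict monoid laws on morphisms
    (hunit₁m : ∀ {α β : D} (φ : α ⟶ β),
      HEq (add.map ((φ, 𝟙 e) : ((α, e) : D × D) ⟶ (β, e))) φ)
    (hunit₂m : ∀ {α β : D} (φ : α ⟶ β),
      HEq (add.map ((𝟙 e, φ) : ((e, α) : D × D) ⟶ (e, β))) φ)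
    (hassocm : ∀ {α α' β β' γ γ' : D} (φ : α ⟶ α') (ψ : β ⟶ β') (χ : γ ⟶ γ'),
      HEq (add.map ((add.map ((φ, ψ) : ((α, β) : D × D) ⟶ (α', β')), χ)
            : ((add.obj (α, β), γ) : D × D) ⟶ (add.obj (α', β'), γ')))
          (add.map ((φ, add.map ((ψ, χ) : ((β, γ) : D × D) ⟶ (β', γ')))
            : ((α, add.obj (β, γ)) : D × D) ⟶ (α', add.obj (β', γ')))))
    -- strict action laws on objects
    (hacte : ∀ a : A, act.obj (a, e) = a)
    (hactcomp : ∀ (a : A) (α β : D),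
      act.obj (act.obj (a, α), β) = act.obj (a, add.obj (α, β)))
    -- strict action laws on morphisms
    (hactem : ∀ {a b : A} (f : a ⟶ b),
      HEq (act.map ((f, 𝟙 e) : ((a, e) : A × D) ⟶ (b, e))) f)
    (hactcompm : ∀ {a b : A} {α α' β β' : D} (f : a ⟶ b) (φ : α ⟶ α') (ψ : β ⟶ β'),
      HEq (act.map ((act.map ((f, φ) : ((a, α) : A × D) ⟶ (b, α')), ψ)
            : ((act.obj (a, α), β) : A × D) ⟶ (act.obj (b, α'), β')))
          (act.map ((f, add.map ((φ, ψ) : ((α, β) : D × D) ⟶ (α', β')))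
            : ((a, add.obj (α, β)) : A × D) ⟶ (b, add.obj (α', β')))))
    (F : A ⥤ Arr G) :
    ∃ dF : (A × D) ⥤ Arr G,
      -- `δF` on objects and morphisms: componentwise differences
      (∀ p : A × D, dF.obj p = F.obj (act.obj p) - F.obj p.1) ∧
      (∀ {p q : A × D} (φ : p ⟶ q),
        (dF.map φ).1
          = ((F.map (act.map φ)).1.1 - (F.map φ.1).1.1,
             (F.map (act.map φ)).1.2 - (F.map φ.1).1.2)) ∧
      -- CAD1 on objects: F(act(A, α)) = F(A) + δF(A, α)
      (∀ (a : A) (α : D), F.obj (act.obj (a, α)) = F.obj a + dF.obj (a, α)) ∧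
      -- CAD1 on morphisms, componentwise
      (∀ {p q : A × D} (φ : p ⟶ q),
        (F.map (act.map φ)).1
          = ((F.map φ.1).1.1 + (dF.map φ).1.1,
             (F.map φ.1).1.2 + (dF.map φ).1.2)) ∧
      -- CAD2, first part, on objects
      (∀ (a : A) (α β : D),
        dF.obj (a, add.obj (α, β)) = dF.obj (a, α) + dF.obj (act.obj (a, α), β)) ∧
      -- CAD2, first part, on morphisms, componentwise
      (∀ {a b : A} {α α' β β' : D} (f : a ⟶ b) (φ : α ⟶ α') (ψ : β ⟶ β'),
        (dF.map ((f, add.map ((φ, ψ) : ((α, β) : D × D) ⟶ (α', β')))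
            : ((a, add.obj (α, β)) : A × D) ⟶ (b, add.obj (α', β')))).1
          = ((dF.map ((f, φ) : ((a, α) : A × D) ⟶ (b, α'))).1.1
              + (dF.map ((act.map ((f, φ) : ((a, α) : A × D) ⟶ (b, α')), ψ)
                  : ((act.obj (a, α), β) : A × D) ⟶ (act.obj (b, α'), β'))).1.1,
             (dF.map ((f, φ) : ((a, α) : A × D) ⟶ (b, α'))).1.2
              + (dF.map ((act.map ((f, φ) : ((a, α) : A × D) ⟶ (b, α')), ψ)
                  : ((act.obj (a, α), β) : A × D) ⟶ (act.obj (b, α'), β'))).1.2)) ∧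
      -- CAD2, second part
      (∀ a : A, dF.obj (a, e) = 0) ∧
      (∀ {a b : A} (f : a ⟶ b),
        (dF.map ((f, 𝟙 e) : ((a, e) : A × D) ⟶ (b, e))).1 = ((0 : G), (0 : G))) :=
  derivative_for_addition_change_action_general G A D act add e hacte hactcomp hactem hactcompm F
end

section
/- Let P be a finite partial order, C an abelian category, X an object of C, and S : P → Subobject X a monotone map. For x ∈ P and n ∈ ℕ let ∪S(x, n) denote the finite supremum in Subobject X of {S y : y ∈ c n x} (equal to the bottom subobject when c n x is empty). Then ∪S is monotone in x and antitone in n: for all x ≤ x' in P and all natural numbers n ≥ m, ∪S(x, n) ≤ ∪S(x', m). (Hence ∪S defines a functor P × ℕᵒᵖ → Subobject X, the extended homological memory functor.) -/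
open CategoryTheory CategoryTheory.Limits

/-- The set of degree-`n` blankets of `x`: `c 0 x = {x}` and
`c (n+1) x = {y | ∃ w ∈ c n x, y ⋖ w}`, where `y ⋖ w` means `w` covers `y`
(`y < w` with nothing strictly in between). -/
def blankets {P : Type*} [PartialOrder P] : ℕ → P → Set P
  | 0, x => {x}
  | n + 1, x => {y | ∃ w ∈ blankets n x, y ⋖ w}

/-- Every degree-`n` blanket lies below some degree-`m` blanket when `m ≤ n`. -/
lemma blankets_le_exists {P : Type*} [PartialOrder P] {n m : ℕ} (hnm : m ≤ n)
    {x y : P} (hy : y ∈ blankets n x) : ∃ w ∈ blankets m x, y ≤ w := by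
  induction n generalizing y with
  | zero => exact ⟨y, Nat.le_zero.mp hnm ▸ hy, le_rfl⟩
  | succ k ih =>
    rcases Nat.lt_or_ge m (k+1) with h | h
    · obtain ⟨w', hw', hcov⟩ := hy
      obtain ⟨w, hw, hle⟩ := ih (Nat.lt_succ_iff.mp h) hw'
      exact ⟨w, hw, hcov.le.trans hle⟩
    · exact ⟨y, le_antisymm h hnm ▸ hy, le_rfl⟩

/-- Monotonicity of blankets: if `x ≤ x'`, every degree-`m` blanket of `x` lies below
some degree-`m` blanket of `x'`. -/
lemma blankets_mono {P : Type*} [Fintype P] [PartialOrder P] (m : ℕ) {x x' : P}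
    (hxx' : x ≤ x') {w : P} (hw : w ∈ blankets m x) : ∃ w' ∈ blankets m x', w ≤ w' := by
  classical
  induction m generalizing w with
  | zero => exact ⟨x', rfl, hw ▸ hxx'⟩
  | succ k ih =>
    obtain ⟨u, hu, hcov⟩ := hw
    obtain ⟨u', hu', hle⟩ := ih hu
    have hwu' : w < u' := hcov.lt.trans_le hle
    obtain ⟨w', hww', hcov'⟩ := exists_le_covBy_of_lt hwu'
    exact ⟨w', ⟨u', hu', hcov'⟩, hww'⟩

/-- The extended homological memory functor: for a monotone `S : P → Subobject X` on a
finite partial order `P`, the assignment `∪S(x, n) = ⨆ (y ∈ c n x), S y` (bottom when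
`c n x = ∅`) is monotone in `x` and antitone in `n`, hence defines a functor
`P × ℕᵒᵖ ⥤ Subobject X`. -/
theorem extended_homological_memory_functorial
    {P : Type*} [Fintype P] [PartialOrder P]
    {C : Type*} [Category C] [Abelian C] (X : C)
    (S : P → Subobject X) (hS : Monotone S)
    (x x' : P) (hxx' : x ≤ x') (n m : ℕ) (hnm : m ≤ n) :
    ((blankets n x).toFinite.toFinset).sup S ≤ ((blankets m x').toFinite.toFinset).sup S := by
  apply Finset.sup_le
  intro y hy
  rw [Set.Finite.mem_toFinset] at hy
  obtain ⟨w, hw, hyw⟩ := blankets_le_exists hnm hy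
  obtain ⟨w', hw', hww'⟩ := blankets_mono m hxx' hw
  exact le_trans (hS (hyw.trans hww'))
    (Finset.le_sup ((blankets m x').toFinite.mem_toFinset.mpr hw'))
end
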